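/- (ADO converges to a Nash equilibrium in at most as many iterations as there are pure strategies.) Let A : S₁ × S₂ → ℝ be the payoff matrix of a finite two-player zero-sum game. Let (T₁ᵗ)_{t≥0}, (T₂ᵗ)_{t≥0} be sequences of nonempty subsets of S₁, S₂ such that for each t: xᵗ ∈ Δ(T₁ᵗ) attains max_{x∈Δ(T₁ᵗ)} min_{y∈Δ(S₂)} v(x,y); yᵗ ∈ Δ(T₂ᵗ) attains min_{y∈Δ(T₂ᵗ)} max_{x∈Δ(S₁)} v(x,y); T₁ᵗ⁺¹ = T₁ᵗ ∪ {β₁ᵗ} where β₁ᵗ ∈ S₁ is a pure best response to yᵗ chosen outside T₁ᵗ whenever some pure best response to yᵗ lies outside T₁ᵗ; and T₂ᵗ⁺¹ = T₂ᵗ ∪ {β₂ᵗ} where β₂ᵗ ∈ S₂ is a pure best response to xᵗ chosen outside T₂ᵗ whenever some pure best response to xᵗ lies outside T₂ᵗ. Then there exists t ≤ |S₁| + |S₂| such that (xᵗ, yᵗ) is a Nash equilibrium of the full game. -/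

import Mathlib

open scoped BigOperators

/-- The set of mixed strategies over a finite action set `S`. -/
def mixed (S : Type*) [Fintype S] : Set (S → ℝ) :=
  {x | (∀ a, 0 ≤ x a) ∧ ∑ a, x a = 1}

/-- Mixed strategies supported in a subset `T` of the action set. -/
def mixedOn {S : Type*} [Fintype S] (T : Set S) : Set (S → ℝ) :=
  {x | x ∈ mixed S ∧ ∀ a ∉ T, x a = 0}

/-- Expected payoff to player 1: `v(x,y) = ∑ x(a) A(a,b) y(b)`. -/
def payoff {S₁ S₂ : Type*} [Fintype S₁] [Fintype S₂]
    (A : S₁ → S₂ → ℝ) (x : S₁ → ℝ) (y : S₂ → ℝ) : ℝ :=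
  ∑ a, ∑ b, x a * A a b * y b

/-- `min_{y ∈ Δ(S₂)} v(x,y)`, the value of player 1's strategy `x`
against a best-responding opponent. -/
noncomputable def minVal {S₁ S₂ : Type*} [Fintype S₁] [Fintype S₂]
    (A : S₁ → S₂ → ℝ) (x : S₁ → ℝ) : ℝ :=
  sInf (payoff A x '' mixed S₂)

/-- `max_{x ∈ Δ(S₁)} v(x,y)`, the value of a best response against
player 2's strategy `y`. -/
noncomputable def maxVal {S₁ S₂ : Type*} [Fintype S₁] [Fintype S₂]
    (A : S₁ → S₂ → ℝ) (y : S₂ → ℝ) : ℝ :=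
  sSup ((fun x => payoff A x y) '' mixed S₁)

/-- Exploitability of the profile `(x,y)`:
`e(x,y) = max_{x'} v(x',y) - min_{y'} v(x,y')`. -/
noncomputable def exploit {S₁ S₂ : Type*} [Fintype S₁] [Fintype S₂]
    (A : S₁ → S₂ → ℝ) (x : S₁ → ℝ) (y : S₂ → ℝ) : ℝ :=
  maxVal A y - minVal A x

/-- The mixed strategy placing probability 1 on the pure strategy `a`. -/
def pureStrat {S : Type*} [DecidableEq S] (a : S) : S → ℝ :=
  fun b => if b = a then 1 else 0

/-!
Suppose that in round `t` neither oracle can add a new strategy, so that every pure best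
response to `yᵗ` lies in `T₁ᵗ` and every pure best response to `xᵗ` lies in `T₂ᵗ`. Let `P`, `Q` be
these sets of best responses and `(x*, y*)` a saddle point of the game restricted to `P × Q`
(von Neumann–Sion). Since `xᵗ` maximises the concave function `minVal` on `Δ(T₁ᵗ) ∋ x*`,
the first-order optimality condition in the direction of `x*` gives an active column `b ∈ Q` with
`v(x*, b) ≤ minVal xᵗ`; dually some `a ∈ P` has `maxVal yᵗ ≤ v(a, y*)`. Thus
`maxVal yᵗ ≤ v(a, y*) ≤ v(x*, b) ≤ minVal xᵗ`, which makes `(xᵗ, yᵗ)` an equilibrium.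
In every other round `|T₁ᵗ| + |T₂ᵗ|` grows, and it never exceeds `|S₁| + |S₂|`.
-/

section Strategies

variable {S : Type*} [Fintype S]

lemma mixedOn_eq_inter_pi (T : Set S) :
    mixedOn T = stdSimplex ℝ S ∩ Tᶜ.pi fun _ => {0} := rfl

lemma convex_mixedOn (T : Set S) : Convex ℝ (mixedOn T) := by
  rw [mixedOn_eq_inter_pi]
  exact (convex_stdSimplex ℝ S).inter (convex_pi fun _ _ => convex_singleton 0)

lemma isCompact_mixedOn (T : Set S) : IsCompact (mixedOn T) := by
  rw [mixedOn_eq_inter_pi]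
  exact (isCompact_stdSimplex ℝ S).inter_right (isClosed_set_pi fun _ _ => isClosed_singleton)

lemma mixedOn_mono {T T' : Set S} (h : T ⊆ T') : mixedOn T ⊆ mixedOn T' :=
  fun _ hz => ⟨hz.1, fun a ha => hz.2 a fun ha' => ha (h ha')⟩

lemma mixedOn_subset_mixed (T : Set S) : mixedOn T ⊆ mixed S := fun _ hz => hz.1

variable [DecidableEq S]

lemma pureStrat_mem_mixedOn {T : Set S} {a : S} (ha : a ∈ T) : pureStrat a ∈ mixedOn T := by
  refine ⟨⟨fun b => ?_, by simp [pureStrat]⟩, fun b hb => ?_⟩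
  · unfold pureStrat; split_ifs <;> norm_num
  · simp [pureStrat, show b ≠ a from fun h => hb (h ▸ ha)]

lemma pureStrat_mem_mixed (a : S) : pureStrat a ∈ mixed S :=
  mixedOn_subset_mixed _ (pureStrat_mem_mixedOn (Set.mem_univ a))

lemma mixedOn_nonempty {T : Set S} (hT : T.Nonempty) : (mixedOn T).Nonempty :=
  let ⟨_, ha⟩ := hT
  ⟨_, pureStrat_mem_mixedOn ha⟩

end Strategies

section Payoff

variable {S₁ S₂ : Type*} [Fintype S₁] [Fintype S₂]

def payoffBilin (A : S₁ → S₂ → ℝ) : (S₁ → ℝ) →ₗ[ℝ] (S₂ → ℝ) →ₗ[ℝ] ℝ :=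
  LinearMap.mk₂ ℝ (payoff A)
    (fun _ _ _ => by simp only [payoff, Pi.add_apply, add_mul, Finset.sum_add_distrib])
    (fun _ _ _ => by simp only [payoff, Pi.smul_apply, smul_eq_mul, Finset.mul_sum, mul_assoc])
    (fun _ _ _ => by simp only [payoff, Pi.add_apply, mul_add, Finset.sum_add_distrib])
    (fun _ _ _ => by
      simp only [payoff, Pi.smul_apply, smul_eq_mul, Finset.mul_sum]
      exact Finset.sum_congr rfl fun _ _ => Finset.sum_congr rfl fun _ _ => by ring)

lemma payoffBilin_apply (A : S₁ → S₂ → ℝ) (x : S₁ → ℝ) (y : S₂ → ℝ) :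
    payoffBilin A x y = payoff A x y := rfl

lemma payoff_smul_add_smul_left (A : S₁ → S₂ → ℝ) (x x' : S₁ → ℝ) (y : S₂ → ℝ) (s t : ℝ) :
    payoff A (s • x + t • x') y = s * payoff A x y + t * payoff A x' y := by
  change payoffBilin A (s • x + t • x') y = s * payoffBilin A x y + t * payoffBilin A x' y
  simp only [map_add, map_smul, LinearMap.add_apply, LinearMap.smul_apply, smul_eq_mul]

lemma payoff_eq_sum_pureStrat [DecidableEq S₂] (A : S₁ → S₂ → ℝ) (x : S₁ → ℝ) (y : S₂ → ℝ) :
    payoff A x y = ∑ b, y b * payoff A x (pureStrat b) := by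
  simp only [payoff, pureStrat, mul_ite, mul_one, mul_zero, Finset.sum_ite_eq', Finset.mem_univ,
    if_true, Finset.mul_sum]
  rw [Finset.sum_comm]
  exact Finset.sum_congr rfl fun _ _ => Finset.sum_congr rfl fun _ _ => by ring

def negTranspose (A : S₁ → S₂ → ℝ) : S₂ → S₁ → ℝ := fun b a => -A a b

lemma payoff_negTranspose (A : S₁ → S₂ → ℝ) (x : S₁ → ℝ) (y : S₂ → ℝ) :
    payoff (negTranspose A) y x = -payoff A x y := by
  simp only [payoff, negTranspose, ← Finset.sum_neg_distrib]
  rw [Finset.sum_comm]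
  exact Finset.sum_congr rfl fun _ _ => Finset.sum_congr rfl fun _ _ => by ring

lemma minVal_negTranspose (A : S₁ → S₂ → ℝ) (y : S₂ → ℝ) :
    minVal (negTranspose A) y = -maxVal A y := by
  rw [minVal, maxVal, ← Real.sInf_neg, ← Set.image_neg_eq_neg, Set.image_image]
  simp only [payoff_negTranspose]

end Payoff

section Values

variable {S₁ S₂ : Type*} [Fintype S₁] [Fintype S₂]

section MinVal

variable [Nonempty S₂] [DecidableEq S₂]

lemma exists_isLeast_payoff_pureStrat (A : S₁ → S₂ → ℝ) (x : S₁ → ℝ) :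
    ∃ b, IsLeast (payoff A x '' mixed S₂) (payoff A x (pureStrat b)) := by
  obtain ⟨b, -, hb⟩ := Finset.univ.exists_min_image (fun b => payoff A x (pureStrat b))
    Finset.univ_nonempty
  refine ⟨b, ⟨pureStrat b, pureStrat_mem_mixed b, rfl⟩, ?_⟩
  rintro _ ⟨y, hy, rfl⟩
  rw [payoff_eq_sum_pureStrat A x y]
  calc payoff A x (pureStrat b) = ∑ b', y b' * payoff A x (pureStrat b) := by
        rw [← Finset.sum_mul, hy.2, one_mul]
    _ ≤ ∑ b', y b' * payoff A x (pureStrat b') :=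
        Finset.sum_le_sum fun b' _ =>
          mul_le_mul_of_nonneg_left (hb b' (Finset.mem_univ _)) (hy.1 b')

lemma exists_payoff_pureStrat_eq_minVal (A : S₁ → S₂ → ℝ) (x : S₁ → ℝ) :
    ∃ b, payoff A x (pureStrat b) = minVal A x :=
  (exists_isLeast_payoff_pureStrat A x).imp fun _ h => h.csInf_eq.symm

lemma minVal_le_payoff (A : S₁ → S₂ → ℝ) (x : S₁ → ℝ) {y : S₂ → ℝ} (hy : y ∈ mixed S₂) :
    minVal A x ≤ payoff A x y := by
  obtain ⟨b, hb⟩ := exists_isLeast_payoff_pureStrat A x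
  rw [minVal, hb.csInf_eq]
  exact hb.2 ⟨y, hy, rfl⟩

end MinVal

variable [Nonempty S₁] [DecidableEq S₁]

lemma exists_payoff_pureStrat_eq_maxVal (A : S₁ → S₂ → ℝ) (y : S₂ → ℝ) :
    ∃ a, payoff A (pureStrat a) y = maxVal A y := by
  obtain ⟨a, ha⟩ := exists_payoff_pureStrat_eq_minVal (negTranspose A) y
  exact ⟨a, neg_injective (by rwa [← payoff_negTranspose, ← minVal_negTranspose])⟩

lemma payoff_le_maxVal (A : S₁ → S₂ → ℝ) (y : S₂ → ℝ) {x : S₁ → ℝ} (hx : x ∈ mixed S₁) :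
    payoff A x y ≤ maxVal A y := by
  have := minVal_le_payoff (negTranspose A) y hx
  rwa [minVal_negTranspose, payoff_negTranspose, neg_le_neg_iff] at this

end Values

-- First-order optimality at `ε = 0` of the minimum of the affine maps `ε ↦ (1 - ε) c i + ε d i`.
open Filter Topology in
lemma exists_eq_and_le_of_forall_exists_convexComb_le {ι : Type*} [Finite ι] {c d : ι → ℝ}
    {v : ℝ} (hc : ∀ i, v ≤ c i)
    (h : ∀ ε ∈ Set.Ioo (0 : ℝ) 1, ∃ i, (1 - ε) * c i + ε * d i ≤ v) :
    ∃ i, c i = v ∧ d i ≤ v := by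
  by_contra! hcd
  have hgt : ∀ i, ∀ᶠ ε in 𝓝[>] (0 : ℝ), v < (1 - ε) * c i + ε * d i := by
    intro i
    rcases (hc i).eq_or_lt with hv | hv
    · filter_upwards [self_mem_nhdsWithin] with ε (hε : 0 < ε)
      nlinarith [hcd i hv.symm]
    · have hlim : Tendsto (fun ε => (1 - ε) * c i + ε * d i) (𝓝[>] 0) (𝓝 (c i)) := by
        have : Continuous fun ε : ℝ => (1 - ε) * c i + ε * d i := by fun_prop
        simpa using (this.tendsto 0).mono_left nhdsWithin_le_nhds
      exact hlim.eventually (lt_mem_nhds hv)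
  obtain ⟨ε, hε, hεv⟩ := (Eventually.and (Ioo_mem_nhdsGT one_pos) (eventually_all.2 hgt)).exists
  obtain ⟨i, hi⟩ := h ε hε
  exact (hεv i).not_ge hi

section FirstOrder

variable {S₁ S₂ : Type*} [Fintype S₁] [Fintype S₂]

lemma exists_payoff_pureStrat_eq_minVal_and_le [Nonempty S₂] [DecidableEq S₂]
    (A : S₁ → S₂ → ℝ) {K : Set (S₁ → ℝ)} (hK : Convex ℝ K) {x x' : S₁ → ℝ} (hx : x ∈ K)
    (hmax : IsMaxOn (minVal A) K x) (hx' : x' ∈ K) :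
    ∃ b, payoff A x (pureStrat b) = minVal A x ∧ payoff A x' (pureStrat b) ≤ minVal A x := by
  refine exists_eq_and_le_of_forall_exists_convexComb_le
    (fun b => minVal_le_payoff A x (pureStrat_mem_mixed b)) fun ε ⟨hε0, hε1⟩ => ?_
  have hmem : (1 - ε) • x + ε • x' ∈ K := hK hx hx' (by linarith) hε0.le (by ring)
  obtain ⟨b, hb⟩ := exists_payoff_pureStrat_eq_minVal A ((1 - ε) • x + ε • x')
  refine ⟨b, ?_⟩
  rw [← payoff_smul_add_smul_left, hb]
  exact hmax hmem

lemma exists_payoff_pureStrat_eq_maxVal_and_le [Nonempty S₁] [DecidableEq S₁]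
    (A : S₁ → S₂ → ℝ) {K : Set (S₂ → ℝ)} (hK : Convex ℝ K) {y y' : S₂ → ℝ} (hy : y ∈ K)
    (hmin : IsMinOn (maxVal A) K y) (hy' : y' ∈ K) :
    ∃ a, payoff A (pureStrat a) y = maxVal A y ∧ maxVal A y ≤ payoff A (pureStrat a) y' := by
  have hmax : IsMaxOn (minVal (negTranspose A)) K y := fun z hz => by
    simpa only [minVal_negTranspose, neg_le_neg_iff] using hmin hz
  obtain ⟨a, ha, ha'⟩ := exists_payoff_pureStrat_eq_minVal_and_le _ hK hy hmax hy'
  simp only [payoff_negTranspose, minVal_negTranspose, neg_inj, neg_le_neg_iff] at ha ha'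
  exact ⟨a, ha, ha'⟩

end FirstOrder

section Equilibrium

variable {S₁ S₂ : Type*} [Fintype S₁] [Fintype S₂]

theorem exists_isSaddlePointOn_payoff (A : S₁ → S₂ → ℝ) {X : Set (S₂ → ℝ)} {Y : Set (S₁ → ℝ)}
    (hXne : X.Nonempty) (hXc : Convex ℝ X) (hXk : IsCompact X)
    (hYne : Y.Nonempty) (hYc : Convex ℝ Y) (hYk : IsCompact Y) :
    ∃ y ∈ X, ∃ x ∈ Y, IsSaddlePointOn X Y (fun y x => payoff A x y) y x :=
  Sion.exists_isSaddlePointOn hXne hXc hXk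
    (fun x _ => (payoffBilin A x).continuous_of_finiteDimensional.continuousOn
      |>.lowerSemicontinuousOn)
    (fun x _ => ((payoffBilin A x).convexOn hXc).quasiconvexOn)
    hYc hYne hYk
    (fun y _ => ((payoffBilin A).flip y).continuous_of_finiteDimensional.continuousOn
      |>.upperSemicontinuousOn)
    (fun y _ => (((payoffBilin A).flip y).concaveOn hYc).quasiconcaveOn)

def IsNashEq (A : S₁ → S₂ → ℝ) (x : S₁ → ℝ) (y : S₂ → ℝ) : Prop :=
  (∀ x' ∈ mixed S₁, payoff A x' y ≤ payoff A x y) ∧ ∀ y' ∈ mixed S₂, payoff A x y ≤ payoff A x y'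

variable [Nonempty S₁] [Nonempty S₂] [DecidableEq S₁] [DecidableEq S₂]

lemma isNashEq_of_maxVal_le_minVal (A : S₁ → S₂ → ℝ) {x : S₁ → ℝ} {y : S₂ → ℝ}
    (hx : x ∈ mixed S₁) (hy : y ∈ mixed S₂) (h : maxVal A y ≤ minVal A x) : IsNashEq A x y :=
  ⟨fun _ hx' => (payoff_le_maxVal A y hx').trans (h.trans (minVal_le_payoff A x hy)),
    fun _ hy' => (payoff_le_maxVal A y hx).trans (h.trans (minVal_le_payoff A x hy'))⟩

theorem maxVal_le_minVal_of_bestResponses_subset (A : S₁ → S₂ → ℝ) {T₁ : Set S₁} {T₂ : Set S₂}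
    {x : S₁ → ℝ} {y : S₂ → ℝ} (hx : x ∈ mixedOn T₁) (hy : y ∈ mixedOn T₂)
    (hxmax : IsMaxOn (minVal A) (mixedOn T₁) x) (hymin : IsMinOn (maxVal A) (mixedOn T₂) y)
    (hP : ∀ a, payoff A (pureStrat a) y = maxVal A y → a ∈ T₁)
    (hQ : ∀ b, payoff A x (pureStrat b) = minVal A x → b ∈ T₂) :
    maxVal A y ≤ minVal A x := by
  set P := {a | payoff A (pureStrat a) y = maxVal A y}
  set Q := {b | payoff A x (pureStrat b) = minVal A x}
  obtain ⟨ys, hys, xs, hxs, hsaddle⟩ := exists_isSaddlePointOn_payoff A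
    (mixedOn_nonempty (exists_payoff_pureStrat_eq_minVal A x)) (convex_mixedOn Q)
    (isCompact_mixedOn Q) (mixedOn_nonempty (exists_payoff_pureStrat_eq_maxVal A y))
    (convex_mixedOn P) (isCompact_mixedOn P)
  obtain ⟨a, haP, ha⟩ := exists_payoff_pureStrat_eq_maxVal_and_le A (convex_mixedOn T₂) hy hymin
    (mixedOn_mono hQ hys)
  obtain ⟨b, hbQ, hb⟩ := exists_payoff_pureStrat_eq_minVal_and_le A (convex_mixedOn T₁) hx hxmax
    (mixedOn_mono hP hxs)
  calc maxVal A y ≤ payoff A (pureStrat a) ys := ha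
    _ ≤ payoff A xs (pureStrat b) :=
        hsaddle _ (pureStrat_mem_mixedOn hbQ) _ (pureStrat_mem_mixedOn haP)
    _ ≤ minVal A x := hb

end Equilibrium

lemma exists_le_of_bounded_of_lt_succ {s : ℕ → ℕ} {N : ℕ} {p : ℕ → Prop} (hs : ∀ t, s t ≤ N)
    (hstep : ∀ t, ¬p t → s t < s (t + 1)) : ∃ t ≤ N, p t := by
  by_contra! hnp
  have hge : ∀ t ≤ N + 1, t ≤ s t := by
    intro t
    induction t with
    | zero => simp
    | succ t ih => exact fun ht => (ih (by omega)).trans_lt (hstep t (hnp t (by omega)))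
  exact absurd (hge (N + 1) le_rfl) (by have := hs (N + 1); omega)

lemma ncard_add_ncard_lt_union_singleton {α β : Type*} [Finite α] [Finite β] {U : Set α}
    {V : Set β} {a : α} {b : β} (h : a ∉ U ∨ b ∉ V) :
    U.ncard + V.ncard < (U ∪ {a}).ncard + (V ∪ {b}).ncard := by
  simp only [Set.union_singleton]
  have hU := Set.ncard_le_ncard (Set.subset_insert a U)
  have hV := Set.ncard_le_ncard (Set.subset_insert b V)
  rcases h with h | h
  · have := Set.ncard_insert_of_notMem h; omega
  · have := Set.ncard_insert_of_notMem h; omega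

theorem ado_converges_general
    {S₁ S₂ : Type*} [Fintype S₁] [Fintype S₂] [Nonempty S₁] [Nonempty S₂]
    [DecidableEq S₁] [DecidableEq S₂]
    (A : S₁ → S₂ → ℝ)
    (T₁ : ℕ → Set S₁) (T₂ : ℕ → Set S₂)
    (x : ℕ → S₁ → ℝ) (y : ℕ → S₂ → ℝ)
    -- xᵗ attains max_{x∈Δ(T₁ᵗ)} min_{y∈Δ(S₂)} v(x,y)
    (hx : ∀ t, x t ∈ mixedOn (T₁ t))
    (hxmax : ∀ t, ∀ x' ∈ mixedOn (T₁ t), minVal A x' ≤ minVal A (x t))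
    -- yᵗ attains min_{y∈Δ(T₂ᵗ)} max_{x∈Δ(S₁)} v(x,y)
    (hy : ∀ t, y t ∈ mixedOn (T₂ t))
    (hymin : ∀ t, ∀ y' ∈ mixedOn (T₂ t), maxVal A (y t) ≤ maxVal A y')
    (β₁ : ℕ → S₁) (β₂ : ℕ → S₂)
    -- T₁ᵗ⁺¹ = T₁ᵗ ∪ {β₁ᵗ}, β₁ᵗ a pure best response to yᵗ
    (hT₁succ : ∀ t, T₁ (t + 1) = T₁ t ∪ {β₁ t})
    -- β₁ᵗ is chosen outside T₁ᵗ whenever some pure best response to yᵗ lies outside T₁ᵗ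
    (hβ₁new : ∀ t, (∃ a ∉ T₁ t, payoff A (pureStrat a) (y t) = maxVal A (y t)) →
      β₁ t ∉ T₁ t)
    -- T₂ᵗ⁺¹ = T₂ᵗ ∪ {β₂ᵗ}, β₂ᵗ a pure best response to xᵗ
    (hT₂succ : ∀ t, T₂ (t + 1) = T₂ t ∪ {β₂ t})
    -- β₂ᵗ is chosen outside T₂ᵗ whenever some pure best response to xᵗ lies outside T₂ᵗ
    (hβ₂new : ∀ t, (∃ b ∉ T₂ t, payoff A (x t) (pureStrat b) = minVal A (x t)) →
      β₂ t ∉ T₂ t) :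
    ∃ t ≤ Fintype.card S₁ + Fintype.card S₂,
      (∀ x' ∈ mixed S₁, payoff A x' (y t) ≤ payoff A (x t) (y t)) ∧
        (∀ y' ∈ mixed S₂, payoff A (x t) (y t) ≤ payoff A (x t) y') := by
  obtain ⟨t, ht, hβ₁, hβ₂⟩ := exists_le_of_bounded_of_lt_succ
      (p := fun t => β₁ t ∈ T₁ t ∧ β₂ t ∈ T₂ t) (s := fun t => (T₁ t).ncard + (T₂ t).ncard)
      (fun t => add_le_add ((T₁ t).ncard_le_card.trans_eq Nat.card_eq_fintype_card)
        ((T₂ t).ncard_le_card.trans_eq Nat.card_eq_fintype_card))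
      fun t hgrow => by
        rw [hT₁succ, hT₂succ]
        exact ncard_add_ncard_lt_union_singleton (not_and_or.mp hgrow)
  have hP : ∀ a, payoff A (pureStrat a) (y t) = maxVal A (y t) → a ∈ T₁ t :=
    fun a ha => not_not.mp fun h => hβ₁new t ⟨a, h, ha⟩ hβ₁
  have hQ : ∀ b, payoff A (x t) (pureStrat b) = minVal A (x t) → b ∈ T₂ t :=
    fun b hb => not_not.mp fun h => hβ₂new t ⟨b, h, hb⟩ hβ₂
  exact ⟨t, ht, isNashEq_of_maxVal_le_minVal A (hx t).1 (hy t).1 <|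
    maxVal_le_minVal_of_bestResponses_subset A (hx t) (hy t) (hxmax t) (hymin t) hP hQ⟩

/-- ADO converges to a Nash equilibrium in at most as many
iterations as there are pure strategies. -/
theorem ado_converges
    {S₁ S₂ : Type*} [Fintype S₁] [Fintype S₂] [Nonempty S₁] [Nonempty S₂]
    [DecidableEq S₁] [DecidableEq S₂]
    (A : S₁ → S₂ → ℝ)
    (T₁ : ℕ → Set S₁) (T₂ : ℕ → Set S₂)
    (hT₁ne : ∀ t, (T₁ t).Nonempty) (hT₂ne : ∀ t, (T₂ t).Nonempty)
    (x : ℕ → S₁ → ℝ) (y : ℕ → S₂ → ℝ)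
    -- xᵗ attains max_{x∈Δ(T₁ᵗ)} min_{y∈Δ(S₂)} v(x,y)
    (hx : ∀ t, x t ∈ mixedOn (T₁ t))
    (hxmax : ∀ t, ∀ x' ∈ mixedOn (T₁ t), minVal A x' ≤ minVal A (x t))
    -- yᵗ attains min_{y∈Δ(T₂ᵗ)} max_{x∈Δ(S₁)} v(x,y)
    (hy : ∀ t, y t ∈ mixedOn (T₂ t))
    (hymin : ∀ t, ∀ y' ∈ mixedOn (T₂ t), maxVal A (y t) ≤ maxVal A y')
    (β₁ : ℕ → S₁) (β₂ : ℕ → S₂)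
    -- T₁ᵗ⁺¹ = T₁ᵗ ∪ {β₁ᵗ}, β₁ᵗ a pure best response to yᵗ
    (hT₁succ : ∀ t, T₁ (t + 1) = T₁ t ∪ {β₁ t})
    (hβ₁br : ∀ t, payoff A (pureStrat (β₁ t)) (y t) = maxVal A (y t))
    -- β₁ᵗ is chosen outside T₁ᵗ whenever some pure best response to yᵗ lies outside T₁ᵗ
    (hβ₁new : ∀ t, (∃ a ∉ T₁ t, payoff A (pureStrat a) (y t) = maxVal A (y t)) →
      β₁ t ∉ T₁ t)
    -- T₂ᵗ⁺¹ = T₂ᵗ ∪ {β₂ᵗ}, β₂ᵗ a pure best response to xᵗ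
    (hT₂succ : ∀ t, T₂ (t + 1) = T₂ t ∪ {β₂ t})
    (hβ₂br : ∀ t, payoff A (x t) (pureStrat (β₂ t)) = minVal A (x t))
    -- β₂ᵗ is chosen outside T₂ᵗ whenever some pure best response to xᵗ lies outside T₂ᵗ
    (hβ₂new : ∀ t, (∃ b ∉ T₂ t, payoff A (x t) (pureStrat b) = minVal A (x t)) →
      β₂ t ∉ T₂ t) :
    ∃ t ≤ Fintype.card S₁ + Fintype.card S₂,
      (∀ x' ∈ mixed S₁, payoff A x' (y t) ≤ payoff A (x t) (y t)) ∧
        (∀ y' ∈ mixed S₂, payoff A (x t) (y t) ≤ payoff A (x t) y') :=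
  ado_converges_general A T₁ T₂ x y hx hxmax hy hymin β₁ β₂ hT₁succ hβ₁new hT₂succ hβ₂new
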